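/- Let X(α) = Σ_{n≥1} a_n α^n be the unique solution in H_R[[α]] of the combinatorial Dyson–Schwinger equation X = α B₊(1/(1−X)), and let φ: H_R → K[x] be the algebra morphism with φ ∘ B₊ = ∫₀ ∘ φ (so φ(f) = x^{|f|}/f!). Then φ(a_{n+1}) = 2^{−n} C_n x^{n+1}, where C_n = (2n)!/(n!(n+1)!) is the n-th Catalan number; equivalently Σ_{t tree, |t|=n+1} σ(t)/t! = 2^{−n} C_n, where σ(t) counts the planar embeddings of t. -/

import Mathlib

/-- Planar rooted trees. -/
inductive RTree : Type where
  | node : List RTree → RTree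

mutual
/-- Number of nodes of a tree. -/
def tsize : RTree → ℕ
  | .node l => 1 + fsize l
/-- Number of nodes of a forest. -/
def fsize : List RTree → ℕ
  | [] => 0
  | t :: ts => tsize t + fsize ts
end

mutual
/-- The tree factorial `t! = Π_{v ∈ V(t)} |t_v|`. -/
def tfact : RTree → ℕ
  | .node l => (1 + fsize l) * ffact l
/-- The tree factorial of a forest (product over its trees). -/
def ffact : List RTree → ℕ
  | [] => 1
  | t :: ts => tfact t * ffact ts
end

mutual
/-- The multiset of all planar rooted trees with `n` nodes; each unordered
rooted tree `t` occurs with multiplicity `σ(t)`, the number of its planar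
embeddings. -/
def treesOf : ℕ → Multiset RTree
  | 0 => 0
  | n + 1 => (forestsOf n).map RTree.node
  termination_by n => 2 * n
/-- The multiset of all planar rooted forests with `n` nodes. -/
def forestsOf : ℕ → Multiset (List RTree)
  | 0 => {[]}
  | n + 1 => ((Finset.range (n + 1)).attach.val).bind fun j =>
      (treesOf (n + 1 - j.1)).bind fun t => (forestsOf j.1).map (t :: ·)
  termination_by n => 2 * n + 1
  decreasing_by
  · omega
  · have := j.2; simp only [Finset.mem_range] at this; omega
end

open TensorProduct Polynomial

variable (K : Type) [Field K] [CharZero K]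

/-- The algebra of rooted trees: the monoid algebra on the free monoid of
rooted trees (with basis the rooted forests). -/
abbrev HTrees := MonoidAlgebra K (FreeMonoid RTree)

/-- The grafting operator `B₊`. -/
noncomputable def Bplus : HTrees K →ₗ[K] HTrees K :=
  MonoidAlgebra.mapDomainLinearMap K K
    (fun f : FreeMonoid RTree => FreeMonoid.of (RTree.node (FreeMonoid.toList f)))

/-!
Both `φ(bₙ)` and the total weight `Σ 1/f!` of the planar forests with `n` nodes satisfy the
convolution recursion `β₀ = 1`, `βₙ₊₁ = Σₖ (k+1)⁻¹ βₖ βₙ₋ₖ`: grafting a forest with `k` nodes onto a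
root divides its weight by `k + 1`, for `t!` as for `∫₀ xᵏ`. This recursion is solved by
`βₙ = 2⁻ⁿ binom(2n, n)`, because `binom(2m, m) = (m+1) Cₘ` and symmetrising the Catalan recursion
gives `2 Σₖ Cₖ binom(2(n-k), n-k) = binom(2n+2, n+1)`. Grafting once more, `aₙ₊₁ = B₊(bₙ)` picks
up the factor `(n+1)⁻¹`, which turns `binom(2n, n)` into `Cₙ`.
-/

open Finset

theorem eq_of_convolution_recursion {R : Type*} [Semiring R] (T : ℕ → R → R) {f g : ℕ → R}
    (h0 : f 0 = g 0)
    (hf : ∀ n, f (n + 1) = ∑ k ∈ range (n + 1), T k (f k) * f (n - k))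
    (hg : ∀ n, g (n + 1) = ∑ k ∈ range (n + 1), T k (g k) * g (n - k)) : f = g := by
  funext n
  induction n using Nat.strong_induction_on with
  | _ n ih =>
    cases n with
    | zero => exact h0
    | succ n =>
      rw [hf, hg]
      refine sum_congr rfl fun k hk => ?_
      have hk : k < n + 1 := mem_range.mp hk
      rw [ih k hk, ih (n - k) (by omega)]

theorem two_mul_sum_catalan_mul_centralBinom (n : ℕ) :
    2 * ∑ k ∈ range (n + 1), catalan k * (n - k).centralBinom = (n + 1).centralBinom := by
  rw [← Nat.sum_antidiagonal_eq_sum_range_succ (fun i j => catalan i * j.centralBinom)]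
  have hswap : ∑ ij ∈ antidiagonal n, catalan ij.1 * ij.2.centralBinom
      = ∑ ij ∈ antidiagonal n, (ij.1 + 1) * (catalan ij.1 * catalan ij.2) := by
    rw [← Nat.sum_antidiagonal_swap]
    refine sum_congr rfl fun ij _ => ?_
    rw [Prod.fst_swap, Prod.snd_swap, ← succ_mul_catalan_eq_centralBinom]
    ring
  calc 2 * ∑ ij ∈ antidiagonal n, catalan ij.1 * ij.2.centralBinom
      = ∑ ij ∈ antidiagonal n, (ij.1 + ij.2 + 2) * (catalan ij.1 * catalan ij.2) := by
        rw [two_mul]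
        nth_rewrite 2 [hswap]
        rw [← sum_add_distrib]
        refine sum_congr rfl fun ij _ => ?_
        rw [← succ_mul_catalan_eq_centralBinom]
        ring
    _ = (n + 2) * catalan (n + 1) := by
        rw [catalan_succ', mul_sum]
        refine sum_congr rfl fun ij hij => ?_
        rw [mem_antidiagonal.mp hij]
    _ = (n + 1).centralBinom := succ_mul_catalan_eq_centralBinom (n + 1)

section HalfCentralBinom

variable {F : Type*} [Field F] [CharZero F]

theorem inv_succ_mul_half_pow_centralBinom (n : ℕ) :
    ((n : F) + 1)⁻¹ * ((2 : F)⁻¹ ^ n * n.centralBinom) = (2 : F)⁻¹ ^ n * catalan n := by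
  rw [← succ_mul_catalan_eq_centralBinom]
  have hn : (n : F) + 1 ≠ 0 := Nat.cast_add_one_ne_zero n
  push_cast
  field_simp

theorem half_pow_centralBinom_succ (n : ℕ) :
    (2 : F)⁻¹ ^ (n + 1) * (n + 1).centralBinom =
      ∑ k ∈ range (n + 1), ((k : F) + 1)⁻¹ * ((2 : F)⁻¹ ^ k * k.centralBinom) *
        ((2 : F)⁻¹ ^ (n - k) * (n - k).centralBinom) := by
  have hterm : ∀ k ∈ range (n + 1),
      ((k : F) + 1)⁻¹ * ((2 : F)⁻¹ ^ k * k.centralBinom) *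
        ((2 : F)⁻¹ ^ (n - k) * (n - k).centralBinom)
      = (2 : F)⁻¹ ^ n * (catalan k * (n - k).centralBinom : ℕ) := by
    intro k hk
    rw [inv_succ_mul_half_pow_centralBinom,
      ← Nat.add_sub_of_le (Nat.lt_succ_iff.mp (mem_range.mp hk)), Nat.add_sub_cancel_left,
      pow_add]
    push_cast
    ring
  rw [sum_congr rfl hterm, ← mul_sum, ← Nat.cast_sum,
    ← two_mul_sum_catalan_mul_centralBinom]
  push_cast
  ring

end HalfCentralBinom

theorem treesOf_succ (n : ℕ) : treesOf (n + 1) = (forestsOf n).map RTree.node := by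
  rw [treesOf]

theorem forestsOf_zero : forestsOf 0 = {[]} := by
  rw [forestsOf]

theorem forestsOf_succ (n : ℕ) : forestsOf (n + 1) =
    ((range (n + 1)).attach.val).bind fun j =>
      (treesOf (n + 1 - j.1)).bind fun t => (forestsOf j.1).map (t :: ·) := by
  rw [forestsOf]

theorem fsize_of_mem_forestsOf {n : ℕ} {l : List RTree} (hl : l ∈ forestsOf n) : fsize l = n := by
  induction n using Nat.strong_induction_on generalizing l with
  | _ n ih =>
    cases n with
    | zero =>
      rw [forestsOf_zero, Multiset.mem_singleton] at hl
      rw [hl, fsize]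
    | succ n =>
      simp only [forestsOf_succ, Multiset.mem_bind, Multiset.mem_map] at hl
      obtain ⟨j, -, t, ht, l', hl', rfl⟩ := hl
      have hj : j.1 ≤ n := Nat.lt_succ_iff.mp (mem_range.mp j.2)
      rw [show n + 1 - j.1 = n - j.1 + 1 by omega, treesOf_succ, Multiset.mem_map] at ht
      obtain ⟨f, hf, rfl⟩ := ht
      rw [fsize, tsize, ih _ (by omega) hf, ih _ (by omega) hl']
      omega

def treeWeight (n : ℕ) : ℚ := ((treesOf n).map fun t => ((tfact t : ℚ))⁻¹).sum

def forestWeight (n : ℕ) : ℚ := ((forestsOf n).map fun l => ((ffact l : ℚ))⁻¹).sum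

theorem treeWeight_succ (n : ℕ) : treeWeight (n + 1) = ((n : ℚ) + 1)⁻¹ * forestWeight n := by
  rw [treeWeight, forestWeight, treesOf_succ, Multiset.map_map, ← Multiset.sum_map_mul_left]
  refine congrArg _ (Multiset.map_congr rfl fun l hl => ?_)
  rw [Function.comp_apply, tfact, fsize_of_mem_forestsOf hl]
  push_cast
  rw [mul_inv, add_comm]

theorem sum_map_inv_ffact_bind_cons (s : Multiset RTree) (F : Multiset (List RTree)) :
    (((s.bind fun t => F.map (t :: ·)).map fun l => ((ffact l : ℚ))⁻¹)).sum =
      (s.map fun t => ((tfact t : ℚ))⁻¹).sum * (F.map fun l => ((ffact l : ℚ))⁻¹).sum := by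
  simp [Multiset.map_bind, Multiset.sum_bind, ffact, Multiset.sum_map_mul_left,
    Multiset.sum_map_mul_right]
  ring

theorem forestWeight_zero : forestWeight 0 = 1 := by
  simp [forestWeight, forestsOf_zero, ffact]

theorem forestWeight_succ (n : ℕ) :
    forestWeight (n + 1) = ∑ k ∈ range (n + 1), treeWeight (k + 1) * forestWeight (n - k) := by
  rw [forestWeight, forestsOf_succ, Multiset.map_bind, Multiset.sum_bind]
  simp only [sum_map_inv_ffact_bind_cons]
  rw [← Finset.sum.eq_def]
  refine (sum_attach (range (n + 1)) fun j => treeWeight (n + 1 - j) * forestWeight j).trans ?_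
  rw [← sum_range_reflect]
  refine sum_congr rfl fun k hk => ?_
  have hk : k < n + 1 := mem_range.mp hk
  rw [show n + 1 - (n + 1 - 1 - k) = k + 1 by omega, show n + 1 - 1 - k = n - k by omega]

theorem forestWeight_eq (n : ℕ) : forestWeight n = (2 : ℚ)⁻¹ ^ n * n.centralBinom :=
  congrFun (eq_of_convolution_recursion (fun k x => ((k : ℚ) + 1)⁻¹ * x) (f := forestWeight)
    (g := fun n => (2 : ℚ)⁻¹ ^ n * n.centralBinom) (by simp [forestWeight_zero])
    (fun n => by simp only [forestWeight_succ, treeWeight_succ])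
    half_pow_centralBinom_succ) n

theorem apply_C_mul_X_pow {F : Type*} [Field F] {I : F[X] →ₗ[F] F[X]}
    (hI : ∀ n : ℕ, I (X ^ n) = C (((n : F) + 1)⁻¹) * X ^ (n + 1)) (c : F) (k : ℕ) :
    I (C c * X ^ k) = C (((k : F) + 1)⁻¹ * c) * X ^ (k + 1) := by
  rw [← smul_eq_C_mul, map_smul, hI, smul_eq_C_mul, ← mul_assoc, ← C_mul, mul_comm c]

theorem C_half_pow_centralBinom_mul_X_pow_succ {F : Type*} [Field F] [CharZero F]
    {I : F[X] →ₗ[F] F[X]} (hI : ∀ n : ℕ, I (X ^ n) = C (((n : F) + 1)⁻¹) * X ^ (n + 1))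
    (n : ℕ) :
    C ((2 : F)⁻¹ ^ (n + 1) * (n + 1).centralBinom) * X ^ (n + 1) =
      ∑ k ∈ range (n + 1), I (C ((2 : F)⁻¹ ^ k * k.centralBinom) * X ^ k) *
        (C ((2 : F)⁻¹ ^ (n - k) * (n - k).centralBinom) * X ^ (n - k)) := by
  rw [half_pow_centralBinom_succ, map_sum, sum_mul]
  refine sum_congr rfl fun k hk => ?_
  obtain ⟨m, rfl⟩ := Nat.exists_eq_add_of_le (Nat.lt_succ_iff.mp (mem_range.mp hk))
  rw [apply_C_mul_X_pow hI, Nat.add_sub_cancel_left, show k + m + 1 = k + 1 + m by omega, pow_add,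
    C_mul]
  ring

/-- let `X(α) = Σ_{n ≥ 1} aₙ αⁿ` be the solution of the
combinatorial Dyson–Schwinger equation `X = α B₊(1/(1-X))`, encoded by the
coefficient recursion `aₙ₊₁ = B₊(bₙ)`, `b₀ = 1`, `bₙ = Σ_{k=1}^{n} aₖ bₙ₋ₖ`
(so that `bₙ = Σ_k Σ_{i₁+⋯+i_k=n} a_{i₁}⋯a_{i_k}`), and let `φ : H_R → K[x]`
be the algebra morphism with `φ ∘ B₊ = ∫₀ ∘ φ`.  Then
`φ(aₙ₊₁) = 2⁻ⁿ Cₙ xⁿ⁺¹` with `Cₙ` the `n`-th Catalan number; equivalently,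
`Σ_{|t| = n+1} σ(t)/t! = 2⁻ⁿ Cₙ`, the sum over trees with `n+1` nodes weighted
by the number `σ(t)` of planar embeddings. -/
theorem dyson_schwinger_catalan
    (I : K[X] →ₗ[K] K[X])
    (hI : ∀ n : ℕ, I (X ^ n) = C (((n : K) + 1)⁻¹) * X ^ (n + 1))
    (φ : HTrees K →ₐ[K] K[X])
    (hφ : ∀ h : HTrees K, φ (Bplus K h) = I (φ h))
    (a b : ℕ → HTrees K)
    (ha0 : a 0 = 0) (hb0 : b 0 = 1)
    (hb : ∀ n : ℕ,
      b (n + 1) = ∑ k ∈ Finset.range (n + 1), a (k + 1) * b (n - k))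
    (ha : ∀ n : ℕ, a (n + 1) = Bplus K (b n)) :
    (∀ n : ℕ, φ (a (n + 1)) =
      C ((2 : K)⁻¹ ^ n * (catalan n : K)) * X ^ (n + 1)) ∧
    (∀ n : ℕ,
      ((treesOf (n + 1)).map (fun t => ((tfact t : ℚ))⁻¹)).sum =
        (2 : ℚ)⁻¹ ^ n * (catalan n : ℚ)) := by
  have hφb : ∀ n, φ (b n) = C ((2 : K)⁻¹ ^ n * n.centralBinom) * X ^ n :=
    congrFun (eq_of_convolution_recursion (fun _ p => I p) (f := fun n => φ (b n))
      (by simp [hb0]) (fun n => by simp only [hb, map_sum, map_mul, ha, hφ])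
      (C_half_pow_centralBinom_mul_X_pow_succ hI))
  refine ⟨fun n => ?_, fun n => ?_⟩
  · rw [ha, hφ, hφb, apply_C_mul_X_pow hI, inv_succ_mul_half_pow_centralBinom]
  · change treeWeight (n + 1) = _
    rw [treeWeight_succ, forestWeight_eq, inv_succ_mul_half_pow_centralBinom]
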